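/- arXiv:2412.20952 — 4 statements merged into one kernel-verified Lean document; each statement's English description precedes it below -/
import Mathlib

section
/- Let H be a connected graded bialgebra over a field (so H is a Hopf algebra with antipode S defined recursively by S(1)=1 and S(x) = −x − Σ S(x'_i)x''_i for x homogeneous of positive degree, where Δ(x) = x⊗1 + 1⊗x + Σ x'_i⊗x''_i with x'_i, x''_i of strictly smaller positive degree). If d : H → H is both a derivation with respect to the product and a coderivation with respect to the coproduct, then d commutes with the antipode: d∘S = S∘d. -/
open TensorProduct Coalgebra LinearMap

namespace ConvAux

variable {K : Type*} [Field K] {H : Type*} [Ring H] [HopfAlgebra K H]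

/-- convolution product -/
noncomputable def conv (f g : H →ₗ[K] H) : H →ₗ[K] H :=
  LinearMap.mul' K H ∘ₗ TensorProduct.map f g ∘ₗ Coalgebra.comul

lemma mul'_assoc :
    LinearMap.mul' K H ∘ₗ (LinearMap.mul' K H).rTensor H
      = LinearMap.mul' K H ∘ₗ (LinearMap.mul' K H).lTensor H
          ∘ₗ (TensorProduct.assoc K H H H).toLinearMap := by
  apply TensorProduct.ext
  apply TensorProduct.ext'
  intro x y
  ext z
  simp [mul_assoc]

lemma conv_assoc (f g h : H →ₗ[K] H) : conv (conv f g) h = conv f (conv g h) := by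
  unfold conv
  have h1 : TensorProduct.map (LinearMap.mul' K H ∘ₗ TensorProduct.map f g ∘ₗ Coalgebra.comul) h
      = (LinearMap.mul' K H).rTensor H ∘ₗ TensorProduct.map (TensorProduct.map f g) h
          ∘ₗ (Coalgebra.comul (R := K) (A := H)).rTensor H := by
    simp only [rTensor, ← TensorProduct.map_comp, LinearMap.comp_id, LinearMap.id_comp]
  have h2 : TensorProduct.map f (LinearMap.mul' K H ∘ₗ TensorProduct.map g h ∘ₗ Coalgebra.comul)
      = (LinearMap.mul' K H).lTensor H ∘ₗ TensorProduct.map f (TensorProduct.map g h)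
          ∘ₗ (Coalgebra.comul (R := K) (A := H)).lTensor H := by
    simp only [lTensor, ← TensorProduct.map_comp, LinearMap.comp_id, LinearMap.id_comp]
  rw [h1, h2]
  have hco : (Coalgebra.comul (R := K) (A := H)).rTensor H ∘ₗ Coalgebra.comul
      = (TensorProduct.assoc K H H H).symm.toLinearMap
          ∘ₗ (Coalgebra.comul (R := K) (A := H)).lTensor H ∘ₗ Coalgebra.comul := by
    rw [← Coalgebra.coassoc (R := K) (A := H)]
    ext x
    simp
  have hnat : TensorProduct.map (TensorProduct.map f g) h
        ∘ₗ (TensorProduct.assoc K H H H).symm.toLinearMap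
      = (TensorProduct.assoc K H H H).symm.toLinearMap
          ∘ₗ TensorProduct.map f (TensorProduct.map g h) :=
    TensorProduct.map_map_comp_assoc_symm_eq f g h
  calc LinearMap.mul' K H ∘ₗ ((LinearMap.mul' K H).rTensor H
        ∘ₗ TensorProduct.map (TensorProduct.map f g) h
        ∘ₗ (Coalgebra.comul (R := K) (A := H)).rTensor H) ∘ₗ Coalgebra.comul
      = (LinearMap.mul' K H ∘ₗ (LinearMap.mul' K H).rTensor H)
        ∘ₗ (TensorProduct.map (TensorProduct.map f g) h
        ∘ₗ (TensorProduct.assoc K H H H).symm.toLinearMap)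
        ∘ₗ ((Coalgebra.comul (R := K) (A := H)).lTensor H ∘ₗ Coalgebra.comul) := by
        simp only [LinearMap.comp_assoc] ; rw [hco]
    _ = (LinearMap.mul' K H ∘ₗ (LinearMap.mul' K H).rTensor H)
        ∘ₗ ((TensorProduct.assoc K H H H).symm.toLinearMap
        ∘ₗ TensorProduct.map f (TensorProduct.map g h))
        ∘ₗ ((Coalgebra.comul (R := K) (A := H)).lTensor H ∘ₗ Coalgebra.comul) := by rw [hnat]
    _ = LinearMap.mul' K H ∘ₗ ((LinearMap.mul' K H).lTensor H
        ∘ₗ TensorProduct.map f (TensorProduct.map g h)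
        ∘ₗ (Coalgebra.comul (R := K) (A := H)).lTensor H) ∘ₗ Coalgebra.comul := by
        rw [mul'_assoc]
        simp only [LinearMap.comp_assoc]
        congr 2
        ext x
        simp

/-- unit of convolution -/
noncomputable def cunit : H →ₗ[K] H := Algebra.linearMap K H ∘ₗ Coalgebra.counit

lemma conv_cunit_right (f : H →ₗ[K] H) : conv f cunit = f := by
  have h1 : (LinearMap.mul' K H) ∘ₗ TensorProduct.map f (cunit (K := K) (H := H))
      = (TensorProduct.rid K H).toLinearMap ∘ₗ TensorProduct.map f (Coalgebra.counit) := by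
    apply TensorProduct.ext'
    intro x y
    simp [cunit, Algebra.smul_def, ← Algebra.commutes]
  have h2 : TensorProduct.map f (Coalgebra.counit (R := K))
      = f.rTensor K ∘ₗ (Coalgebra.counit (R := K) (A := H)).lTensor H := by
    rw [LinearMap.rTensor_comp_lTensor]
  ext x
  have e1 := LinearMap.congr_fun h1 (Coalgebra.comul (R := K) x)
  have e2 := LinearMap.congr_fun h2 (Coalgebra.comul (R := K) x)
  simp only [LinearMap.comp_apply] at e1 e2
  simp only [conv, LinearMap.comp_apply, e1, e2, Coalgebra.lTensor_counit_comul]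
  simp

lemma conv_cunit_left (f : H →ₗ[K] H) : conv cunit f = f := by
  have h1 : (LinearMap.mul' K H) ∘ₗ TensorProduct.map (cunit (K := K) (H := H)) f
      = (TensorProduct.lid K H).toLinearMap ∘ₗ TensorProduct.map (Coalgebra.counit) f := by
    apply TensorProduct.ext'
    intro x y
    simp [cunit, Algebra.smul_def]
  have h2 : TensorProduct.map (Coalgebra.counit (R := K)) f
      = f.lTensor K ∘ₗ (Coalgebra.counit (R := K) (A := H)).rTensor H := by
    rw [LinearMap.lTensor_comp_rTensor]
  ext x
  have e1 := LinearMap.congr_fun h1 (Coalgebra.comul (R := K) x)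
  have e2 := LinearMap.congr_fun h2 (Coalgebra.comul (R := K) x)
  simp only [LinearMap.comp_apply] at e1 e2
  simp only [conv, LinearMap.comp_apply, e1, e2, Coalgebra.rTensor_counit_comul]
  simp

lemma conv_antipode_id : conv (HopfAlgebra.antipode K : H →ₗ[K] H) LinearMap.id = cunit := by
  have := HopfAlgebra.mul_antipode_rTensor_comul (R := K) (A := H)
  simpa [conv, cunit, LinearMap.rTensor, LinearMap.comp_assoc] using this

lemma conv_id_antipode : conv (LinearMap.id : H →ₗ[K] H) (HopfAlgebra.antipode K) = cunit := by
  have := HopfAlgebra.mul_antipode_lTensor_comul (R := K) (A := H)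
  simpa [conv, cunit, LinearMap.lTensor, LinearMap.comp_assoc] using this


section Deriv

variable (d : H →ₗ[K] H)

lemma d_one (hder : ∀ x y : H, d (x * y) = d x * y + x * d y) : d 1 = 0 := by
  have h := hder 1 1
  simp only [one_mul, mul_one] at h
  exact (left_eq_add.mp h)

lemma d_comp_cunit (h1 : d 1 = 0) : d ∘ₗ (cunit : H →ₗ[K] H) = 0 := by
  ext x
  simp [cunit, Algebra.algebraMap_eq_smul_one, h1]

lemma d_comp_mul' (hder : ∀ x y : H, d (x * y) = d x * y + x * d y) :
    d ∘ₗ LinearMap.mul' K H =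
      LinearMap.mul' K H ∘ₗ
        (TensorProduct.map d LinearMap.id + TensorProduct.map LinearMap.id d) := by
  apply TensorProduct.ext'
  intro x y
  simp [hder]

lemma map_distrib (f g : H →ₗ[K] H) :
    (TensorProduct.map d LinearMap.id + TensorProduct.map LinearMap.id d :
        H ⊗[K] H →ₗ[K] H ⊗[K] H) ∘ₗ TensorProduct.map f g
      = TensorProduct.map (d ∘ₗ f) g + TensorProduct.map f (d ∘ₗ g) := by
  simp only [LinearMap.add_comp, ← TensorProduct.map_comp, LinearMap.id_comp,
    LinearMap.comp_id]

lemma map_distrib' (f g : H →ₗ[K] H) :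
    TensorProduct.map f g ∘ₗ
      (TensorProduct.map d LinearMap.id + TensorProduct.map LinearMap.id d :
        H ⊗[K] H →ₗ[K] H ⊗[K] H)
      = TensorProduct.map (f ∘ₗ d) g + TensorProduct.map f (g ∘ₗ d) := by
  simp only [LinearMap.comp_add, ← TensorProduct.map_comp, LinearMap.id_comp,
    LinearMap.comp_id]

lemma d_comp_conv (hder : ∀ x y : H, d (x * y) = d x * y + x * d y) (f g : H →ₗ[K] H) :
    d ∘ₗ conv f g = conv (d ∘ₗ f) g + conv f (d ∘ₗ g) := by
  unfold conv
  rw [← LinearMap.comp_assoc, d_comp_mul' d hder, LinearMap.comp_assoc,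
    ← LinearMap.comp_assoc _ (TensorProduct.map f g), map_distrib]
  simp only [LinearMap.add_comp, LinearMap.comp_add]

lemma conv_comp_d
    (hcoder : Coalgebra.comul ∘ₗ d =
      (TensorProduct.map d LinearMap.id + TensorProduct.map LinearMap.id d :
        H ⊗[K] H →ₗ[K] H ⊗[K] H) ∘ₗ Coalgebra.comul) (f g : H →ₗ[K] H) :
    conv f g ∘ₗ d = conv (f ∘ₗ d) g + conv f (g ∘ₗ d) := by
  unfold conv
  rw [LinearMap.comp_assoc, LinearMap.comp_assoc, hcoder,
    ← LinearMap.comp_assoc _ _ (TensorProduct.map f g), map_distrib']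
  simp only [LinearMap.add_comp, LinearMap.comp_add, LinearMap.comp_assoc]

lemma counit_comp_d
    (hcoder : Coalgebra.comul ∘ₗ d =
      (TensorProduct.map d LinearMap.id + TensorProduct.map LinearMap.id d :
        H ⊗[K] H →ₗ[K] H ⊗[K] H) ∘ₗ Coalgebra.comul) :
    (Coalgebra.counit : H →ₗ[K] K) ∘ₗ d = 0 := by
  have stepA : ((Coalgebra.counit : H →ₗ[K] K) ∘ₗ d).rTensor H ∘ₗ Coalgebra.comul = 0 := by
    have h0 : (Coalgebra.counit : H →ₗ[K] K).rTensor H ∘ₗ (Coalgebra.comul ∘ₗ d)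
        = (Coalgebra.counit : H →ₗ[K] K).rTensor H ∘ₗ
            ((TensorProduct.map d LinearMap.id + TensorProduct.map LinearMap.id d :
              H ⊗[K] H →ₗ[K] H ⊗[K] H) ∘ₗ Coalgebra.comul) := by rw [hcoder]
    have h1 : (Coalgebra.counit : H →ₗ[K] K).rTensor H ∘ₗ (Coalgebra.comul ∘ₗ d)
        = TensorProduct.mk K K H 1 ∘ₗ d := by
      rw [← LinearMap.comp_assoc, Coalgebra.rTensor_counit_comp_comul]
    have h2 : (Coalgebra.counit : H →ₗ[K] K).rTensor H ∘ₗ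
        TensorProduct.map d (LinearMap.id : H →ₗ[K] H)
        = ((Coalgebra.counit : H →ₗ[K] K) ∘ₗ d).rTensor H := by
      simp only [LinearMap.rTensor, ← TensorProduct.map_comp, LinearMap.id_comp,
        LinearMap.comp_id]
    have h3 : (Coalgebra.counit : H →ₗ[K] K).rTensor H ∘ₗ
        TensorProduct.map (LinearMap.id : H →ₗ[K] H) d
        = d.lTensor K ∘ₗ (Coalgebra.counit : H →ₗ[K] K).rTensor H := by
      simp only [LinearMap.rTensor, LinearMap.lTensor, ← TensorProduct.map_comp,
        LinearMap.id_comp, LinearMap.comp_id]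
    have h4 : d.lTensor K ∘ₗ ((Coalgebra.counit : H →ₗ[K] K).rTensor H ∘ₗ Coalgebra.comul)
        = TensorProduct.mk K K H 1 ∘ₗ d := by
      rw [Coalgebra.rTensor_counit_comp_comul]
      ext x
      simp
    rw [h1, ← LinearMap.comp_assoc, LinearMap.comp_add, h2, h3, LinearMap.add_comp,
      LinearMap.comp_assoc, h4] at h0
    refine LinearMap.ext fun x => ?_
    have h5 := LinearMap.congr_fun h0 x
    rw [LinearMap.add_apply] at h5
    exact right_eq_add.mp h5
  ext x
  have hB : TensorProduct.map ((Coalgebra.counit : H →ₗ[K] K) ∘ₗ d)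
      (Coalgebra.counit : H →ₗ[K] K) ∘ₗ Coalgebra.comul = 0 := by
    rw [← LinearMap.lTensor_comp_rTensor, LinearMap.comp_assoc, stepA, LinearMap.comp_zero]
  have hB' : TensorProduct.map ((Coalgebra.counit : H →ₗ[K] K) ∘ₗ d)
      (Coalgebra.counit : H →ₗ[K] K) ∘ₗ Coalgebra.comul
      = ((Coalgebra.counit : H →ₗ[K] K) ∘ₗ d).rTensor K ∘ₗ
        ((Coalgebra.counit : H →ₗ[K] K).lTensor H ∘ₗ Coalgebra.comul) := by
    rw [← LinearMap.comp_assoc, LinearMap.rTensor_comp_lTensor]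
  rw [hB'] at hB
  have := LinearMap.congr_fun hB x
  rw [LinearMap.comp_apply, LinearMap.comp_apply, Coalgebra.lTensor_counit_comul] at this
  simp only [LinearMap.rTensor_tmul, LinearMap.comp_apply] at this
  have := congrArg (TensorProduct.lid K K) this
  simpa using this

end Deriv

theorem main (d : H →ₗ[K] H)
    (hder : ∀ x y : H, d (x * y) = d x * y + x * d y)
    (hcoder : Coalgebra.comul ∘ₗ d =
      (TensorProduct.map d LinearMap.id + TensorProduct.map LinearMap.id d :
        H ⊗[K] H →ₗ[K] H ⊗[K] H) ∘ₗ Coalgebra.comul) :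
    d ∘ₗ (HopfAlgebra.antipode K : H →ₗ[K] H) = HopfAlgebra.antipode K ∘ₗ d := by
  set S : H →ₗ[K] H := HopfAlgebra.antipode K with hS
  have e1 : conv (d ∘ₗ S) LinearMap.id + conv S d = 0 := by
    have := d_comp_conv d hder S LinearMap.id
    rw [conv_antipode_id, d_comp_cunit d (d_one d hder), LinearMap.comp_id] at this
    exact this.symm
  have e2 : conv (S ∘ₗ d) LinearMap.id + conv S d = 0 := by
    have := conv_comp_d d hcoder S LinearMap.id
    rw [conv_antipode_id, LinearMap.id_comp] at this
    have hz : (cunit : H →ₗ[K] H) ∘ₗ d = 0 := by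
      have : (cunit : H →ₗ[K] H) ∘ₗ d
          = Algebra.linearMap K H ∘ₗ ((Coalgebra.counit : H →ₗ[K] K) ∘ₗ d) := by
        rw [cunit, LinearMap.comp_assoc]
      rw [this, counit_comp_d d hcoder, LinearMap.comp_zero]
    rw [hz] at this
    exact this.symm
  have key : conv (d ∘ₗ S) LinearMap.id = conv (S ∘ₗ d) LinearMap.id := by
    have := e1.trans e2.symm
    exact add_right_cancel this
  calc d ∘ₗ S = conv (d ∘ₗ S) cunit := (conv_cunit_right _).symm
    _ = conv (d ∘ₗ S) (conv LinearMap.id S) := by rw [conv_id_antipode]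
    _ = conv (conv (d ∘ₗ S) LinearMap.id) S := (conv_assoc _ _ _).symm
    _ = conv (conv (S ∘ₗ d) LinearMap.id) S := by rw [key]
    _ = conv (S ∘ₗ d) (conv LinearMap.id S) := conv_assoc _ _ _
    _ = conv (S ∘ₗ d) cunit := by rw [conv_id_antipode]
    _ = S ∘ₗ d := conv_cunit_right _

end ConvAux


/-- Let `H` be a connected graded bialgebra over a field `K` (hence a Hopf
algebra, with its unique antipode `S`). If `d` is both a derivation for the product and a
coderivation for the coproduct, then `d ∘ S = S ∘ d`. -/
theorem coderivation_derivation_commutes_with_antipode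
    (K : Type*) [Field K] (H : Type*) [Ring H] [HopfAlgebra K H]
    (𝒜 : ℕ → Submodule K H) [GradedAlgebra 𝒜]
    -- connectedness: the degree-0 component is spanned by the unit
    (hconn : 𝒜 0 = (1 : Submodule K H))
    (hker : ∀ (k : ℕ), 0 < k → ∀ x ∈ 𝒜 k, Coalgebra.counit (R := K) x = 0)
    -- the coproduct respects the grading
    (hcograded : ∀ (k : ℕ), ∀ x ∈ 𝒜 k,
      Coalgebra.comul (R := K) x ∈
        ⨆ (p : ℕ × ℕ) (_ : p.1 + p.2 = k),
          LinearMap.range (TensorProduct.map (𝒜 p.1).subtype (𝒜 p.2).subtype))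
    (d : H →ₗ[K] H)
    (hder : ∀ x y : H, d (x * y) = d x * y + x * d y)
    (hcoder : Coalgebra.comul ∘ₗ d =
      (TensorProduct.map d LinearMap.id + TensorProduct.map LinearMap.id d :
        H ⊗[K] H →ₗ[K] H ⊗[K] H) ∘ₗ Coalgebra.comul) :
    d ∘ₗ (HopfAlgebra.antipode K : H →ₗ[K] H) = HopfAlgebra.antipode K ∘ₗ d := by
  exact ConvAux.main d hder hcoder
end

section
/- Let (H_{Z}, ⧢) be the extended shuffle algebra on the Q-vector space spanned by the unit 1 and symbols [s_1,...,s_k] with s_i ∈ Z, with derivation J sending 1 to 0 and [s_1,...,s_k] to [s_1−1,s_2,...,s_k]. Then for (s_1, s') ∈ Z_{≥1} × Z^k and (t_1, t') ∈ Z_{≥1} × Z^ℓ, the generalized Euler decomposition formula holds: [s_1, s'] ⧢ [t_1, t'] = Σ_{i=0}^{t_1−1} C(s_1−1+i, i) [s_1+i, s' ⧢ [t_1−i, t']] + Σ_{i=0}^{s_1−1} C(t_1−1+i, i) [t_1+i, [s_1−i, s'] ⧢ t']. -/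
open Finsupp TensorProduct

noncomputable section

/-- The underlying space of the extended shuffle algebra: formal ℚ-linear
combinations of words (lists of integers); the empty word is the unit `1`. -/
abbrev W : Type := List ℤ →₀ ℚ

/-- The basis word `[s₁,…,s_k]` (the empty list is the unit `1`). -/
def wd (l : List ℤ) : W := Finsupp.single l 1

/-- A word has all entries nonpositive. -/
def NP (l : List ℤ) : Prop := ∀ a ∈ l, a ≤ 0

/-- A word has all entries positive. -/
def Pos (l : List ℤ) : Prop := ∀ a ∈ l, 1 ≤ a

/-- The operator `J : 1 ↦ 0, [s₁,s₂,…] ↦ [s₁-1,s₂,…]`. -/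
def Jop : W →ₗ[ℚ] W :=
  Finsupp.lsum ℚ fun l => match l with
    | [] => (0 : ℚ →ₗ[ℚ] W)
    | a :: s => Finsupp.lsingle ((a - 1) :: s)

/-- Prepending `a` to every word: `[a, w]`. -/
def pre (a : ℤ) : W →ₗ[ℚ] W := Finsupp.lmapDomain ℚ ℚ (List.cons a)

/-- Characterization of the extended shuffle product on `H_ℤ`. -/
structure IsExtShuffle (sh : W →ₗ[ℚ] W →ₗ[ℚ] W) : Prop where
  assoc : ∀ x y z : W, sh (sh x y) z = sh x (sh y z)
  one_mul : ∀ x : W, sh (wd []) x = x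
  mul_one : ∀ x : W, sh x (wd []) = x
  zero_mul_word : ∀ s : List ℤ, sh (wd [0]) (wd s) = wd (0 :: s)
  word_mul_zero : ∀ (a : ℤ) (s : List ℤ), 0 < a → sh (wd (a :: s)) (wd [0]) = wd (0 :: a :: s)
  leibniz : ∀ x y : W, Jop (sh x y) = sh (Jop x) y + sh x (Jop y)
  graded : ∀ s t l : List ℤ, l.length ≠ s.length + t.length → sh (wd s) (wd t) l = 0

/-- The operator `J_{≥1}`. -/
def J1 : W →ₗ[ℚ] W :=
  Finsupp.lsum ℚ fun l => match l with
    | [] => (0 : ℚ →ₗ[ℚ] W)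
    | a :: s => if a = 1 then 0 else Finsupp.lsingle ((a - 1) :: s)

/-- The operator `δ_i`. -/
def del (i : ℕ) : W →ₗ[ℚ] W :=
  Finsupp.lsum ℚ fun l =>
    if i ≤ l.length then
      ∑ j ∈ Finset.range i, ((l.getD j 0 : ℤ) : ℚ) • Finsupp.lsingle (l.set j (l.getD j 0 + 1))
    else 0

def delZ (i : ℤ) : W →ₗ[ℚ] W := if 0 < i then del i.toNat else 0

/-- The shifted tensor `A ⊗̂ δ_i`. -/
def shiftT (A : W →ₗ[ℚ] W) (i : ℕ) : W ⊗[ℚ] W →ₗ[ℚ] W ⊗[ℚ] W :=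
  TensorProduct.lift <| Finsupp.lsum ℚ fun s =>
    LinearMap.toSpanSingleton ℚ (W →ₗ[ℚ] W ⊗[ℚ] W)
      ((TensorProduct.mk ℚ W W (A (wd s))) ∘ₗ delZ ((i : ℤ) - s.length))

/-- The counit. -/
def eps : W →ₗ[ℚ] ℚ :=
  Finsupp.lsum ℚ fun l => if l = [] then LinearMap.id else 0

/-- The grading degree `n - (s₁+⋯+s_n)` on words with nonpositive entries. -/
def gdeg (l : List ℤ) : ℤ := l.length - l.sum

/-- The componentwise product on `W ⊗ W`. -/
def shT (sh : W →ₗ[ℚ] W →ₗ[ℚ] W) : W ⊗[ℚ] W →ₗ[ℚ] W ⊗[ℚ] W →ₗ[ℚ] W ⊗[ℚ] W :=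
  TensorProduct.lift (LinearMap.compl₂ ((TensorProduct.mapBilinear (σ₁₂ := RingHom.id ℚ) (M := W) (N := W) (M₂ := W) (N₂ := W)).comp sh) sh)

/-- Characterization of the coproduct `Δ_{≤0}`. -/
structure IsDle0 (sh : W →ₗ[ℚ] W →ₗ[ℚ] W) (D : W →ₗ[ℚ] W ⊗[ℚ] W) : Prop where
  one : D (wd []) = wd [] ⊗ₜ[ℚ] wd []
  zero : D (wd [0]) = wd [] ⊗ₜ[ℚ] wd [0] + wd [0] ⊗ₜ[ℚ] wd []
  coder : ∀ l : List ℤ, NP l → D (Jop (wd l)) =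
      ((TensorProduct.map LinearMap.id Jop + TensorProduct.map Jop LinearMap.id :
        W ⊗[ℚ] W →ₗ[ℚ] W ⊗[ℚ] W)) (D (wd l))
  zeroCons : ∀ l : List ℤ, NP l → D (wd (0 :: l)) = shT sh (D (wd [0])) (D (wd l))

/-- The pairing realizing the Riemann duality map `φ`:
`phiPair x y = (φ x)(y)`, with `φ([s₁,…,s_k]) = [1-s₁,…,1-s_k]*`. -/
def phiPair : W →ₗ[ℚ] W →ₗ[ℚ] ℚ :=
  Finsupp.lsum ℚ fun l =>
    LinearMap.toSpanSingleton ℚ (W →ₗ[ℚ] ℚ) (Finsupp.lapply (l.map fun a => 1 - a))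

/-- `pairT f g` evaluates a tensor against a pair of linear functionals. -/
def pairT (f g : W →ₗ[ℚ] ℚ) : W ⊗[ℚ] W →ₗ[ℚ] ℚ :=
  TensorProduct.lift ((LinearMap.mul ℚ ℚ).compl₁₂ f g)

/-- The transpose of the dual operator `δ̃_m` (with `δ̃_m = 0` for `m ≤ 0`). -/
def tT (m : ℤ) : W →ₗ[ℚ] W :=
  Finsupp.lsum ℚ fun l =>
    if 0 < m ∧ m ≤ (l.length : ℤ) then
      ∑ j ∈ Finset.range m.toNat,
        ((-(l.getD j 0) : ℤ) : ℚ) • Finsupp.lsingle (l.set j (l.getD j 0 + 1))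
    else 0


lemma pre_wd (a : ℤ) (s : List ℤ) : pre a (wd s) = wd (a :: s) := by
  simp [pre, wd, Finsupp.lmapDomain_apply, Finsupp.mapDomain_single]

lemma Jop_wd (c : ℤ) (s : List ℤ) : Jop (wd (c :: s)) = wd ((c-1) :: s) := by
  simp [Jop, wd]

lemma Jop_pre (c : ℤ) (x : W) : Jop (pre c x) = pre (c-1) x := by
  have h : Jop ∘ₗ pre c = pre (c-1) := by
    apply Finsupp.lhom_ext
    intro l q
    have : Finsupp.single l q = q • wd l := by simp [wd, Finsupp.smul_single]
    rw [this]
    simp only [map_smul, LinearMap.comp_apply, pre_wd, Jop_wd]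
  exact LinearMap.congr_fun h x

def Uop : W →ₗ[ℚ] W := Finsupp.lmapDomain ℚ ℚ (fun l => match l with
  | [] => ([] : List ℤ)
  | a :: s => (a+1) :: s)

lemma U_J (x : W) : Uop (Jop x) = x - (x []) • wd [] := by
  induction x using Finsupp.induction_linear with
  | zero => simp
  | add f g hf hg =>
      simp only [map_add, hf, hg, Finsupp.add_apply, add_smul]
      abel
  | single l q =>
      cases l with
      | nil =>
          simp [Jop, wd, Finsupp.smul_single]
      | cons a s =>
          have h1 : Jop (Finsupp.single (a :: s) q) = Finsupp.single ((a-1) :: s) q := by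
            simp [Jop]
          rw [h1]
          have h2 : Uop (Finsupp.single ((a-1) :: s) q) = Finsupp.single ((a-1+1) :: s) q := by
            simp [Uop, Finsupp.lmapDomain_apply, Finsupp.mapDomain_single]
          rw [h2, sub_add_cancel]
          simp [Finsupp.single_apply]

lemma Jop_inj {x : W} (h0 : x [] = 0) (hJ : Jop x = 0) : x = 0 := by
  have := U_J x
  rw [hJ, map_zero, h0, zero_smul, sub_zero] at this
  exact this.symm

lemma pre_apply_nil (c : ℤ) (x : W) : (pre c x) [] = 0 := by
  have : ([] : List ℤ) ∉ Set.range (List.cons c) := by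
    rintro ⟨l, hl⟩; simp at hl
  simp [pre, Finsupp.lmapDomain_apply, Finsupp.mapDomain_notin_range _ _ this]


section ShLemmas
variable (sh : W →ₗ[ℚ] W →ₗ[ℚ] W)

lemma sh_zero_left (hsh : IsExtShuffle sh) (x : W) : sh (wd [0]) x = pre 0 x := by
  have h : sh (wd [0]) = pre 0 := by
    apply Finsupp.lhom_ext
    intro l q
    have hq : Finsupp.single l q = q • wd l := by simp [wd, Finsupp.smul_single]
    rw [hq, map_smul, map_smul, hsh.zero_mul_word, pre_wd]
  rw [h]

lemma sh_pre_zero_left (hsh : IsExtShuffle sh) (x y : W) : sh (pre 0 x) y = pre 0 (sh x y) := by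
  rw [← sh_zero_left sh hsh x, hsh.assoc, sh_zero_left sh hsh]

lemma sh_pre_zero_right (hsh : IsExtShuffle sh) (a : ℤ) (s : List ℤ) (ha : 0 < a) (y : W) :
    sh (wd (a :: s)) (pre 0 y) = pre 0 (sh (wd (a :: s)) y) := by
  have h : (sh (wd (a :: s))) ∘ₗ pre 0 = pre 0 ∘ₗ sh (wd (a :: s)) := by
    apply Finsupp.lhom_ext
    intro l q
    have hq : Finsupp.single l q = q • wd l := by simp [wd, Finsupp.smul_single]
    rw [hq]
    simp only [map_smul, LinearMap.comp_apply]
    congr 1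
    rw [pre_wd, ← hsh.zero_mul_word l, ← hsh.assoc, hsh.word_mul_zero a s ha,
        ← pre_wd 0 (a :: s), sh_pre_zero_left sh hsh]
  exact LinearMap.congr_fun h y

/-- RHS of the Euler decomposition, extended to `a = 0` or `b = 0`. -/
def G (s' t' : List ℤ) (a b : ℕ) : W :=
  (∑ i ∈ Finset.range b, ((a + i - 1).choose i : ℚ) •
      pre ((a : ℤ) + i) (sh (wd s') (wd (((b : ℤ) - i) :: t'))))
  + ∑ i ∈ Finset.range a, ((b + i - 1).choose i : ℚ) •
      pre ((b : ℤ) + i) (sh (wd (((a : ℤ) - i) :: s')) (wd t'))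

lemma G_zero_left (s' t' : List ℤ) (b : ℕ) (hb : 1 ≤ b) :
    G sh s' t' 0 b = pre 0 (sh (wd s') (wd ((b : ℤ) :: t'))) := by
  unfold G
  rw [Finset.sum_range_zero, add_zero]
  rw [Finset.sum_eq_single 0]
  · norm_num
  · intro i _ hi
    have : (0 + i - 1).choose i = 0 := by
      apply Nat.choose_eq_zero_of_lt; omega
    rw [this]; norm_num
  · intro h; exact absurd (Finset.mem_range.mpr hb) h

lemma G_zero_right (s' t' : List ℤ) (a : ℕ) (ha : 1 ≤ a) :
    G sh s' t' a 0 = pre 0 (sh (wd ((a : ℤ) :: s')) (wd t')) := by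
  unfold G
  rw [Finset.sum_range_zero, zero_add]
  rw [Finset.sum_eq_single 0]
  · norm_num
  · intro i _ hi
    have : (0 + i - 1).choose i = 0 := by
      apply Nat.choose_eq_zero_of_lt; omega
    rw [this]; norm_num
  · intro h; exact absurd (Finset.mem_range.mpr ha) h

end ShLemmas


lemma pascal_sum {M : Type*} [AddCommMonoid M] [Module ℚ M] (n m : ℕ) (F : ℕ → M) :
    ∑ i ∈ Finset.range (m+1), ((n+i).choose i : ℚ) • F i
      = ∑ i ∈ Finset.range (m+1), ((n+i-1).choose i : ℚ) • F i
        + ∑ i ∈ Finset.range m, ((n+i).choose i : ℚ) • F (i+1) := by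
  rw [Finset.sum_range_succ' (fun i => ((n+i).choose i : ℚ) • F i) m,
      Finset.sum_range_succ' (fun i => ((n+i-1).choose i : ℚ) • F i) m]
  have key : ∀ i : ℕ, ((n+(i+1)).choose (i+1) : ℚ)
      = ((n+(i+1)-1).choose (i+1) : ℚ) + ((n+i).choose i : ℚ) := by
    intro i
    have e2 : n+(i+1)-1 = n+i := by omega
    have e3 : n+(i+1) = (n+i)+1 := by omega
    rw [e2, e3, Nat.choose_succ_succ' (n+i) i]
    push_cast
    ring
  simp only [key, add_smul]
  rw [Finset.sum_add_distrib]
  simp only [Nat.add_zero, Nat.choose_zero_right]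
  abel

lemma chsucc (k i : ℕ) : (k+1+i-1).choose i = (k+i).choose i := by congr 1; omega

lemma Jop_G (sh : W →ₗ[ℚ] W →ₗ[ℚ] W) (s' t' : List ℤ) (n m : ℕ) :
    Jop (G sh s' t' (n+1) (m+1)) = G sh s' t' n (m+1) + G sh s' t' (n+1) m := by
  have e1 : ∀ i : ℕ, ((n+1:ℕ):ℤ)+(i:ℤ)-1 = (n:ℤ)+(i:ℤ) := fun i => by push_cast; ring
  have e2 : ∀ i : ℕ, ((m+1:ℕ):ℤ)-(i:ℤ) = (m:ℤ)+1-(i:ℤ) := fun i => by push_cast; ring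
  have e3 : ∀ i : ℕ, ((m+1:ℕ):ℤ)+(i:ℤ)-1 = (m:ℤ)+(i:ℤ) := fun i => by push_cast; ring
  have e4 : ∀ i : ℕ, ((n+1:ℕ):ℤ)-(i:ℤ) = (n:ℤ)+1-(i:ℤ) := fun i => by push_cast; ring
  have e5 : ∀ i : ℕ, ((m+1:ℕ):ℤ)+(i:ℤ) = (m:ℤ)+((i:ℤ)+1) := fun i => by push_cast; ring
  have e6 : ∀ i : ℕ, ((n:ℕ):ℤ)-(i:ℤ) = (n:ℤ)+1-((i:ℤ)+1) := fun i => by push_cast; ring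
  have e7 : ∀ i : ℕ, ((n+1:ℕ):ℤ)+(i:ℤ) = (n:ℤ)+((i:ℤ)+1) := fun i => by push_cast; ring
  have e8 : ∀ i : ℕ, ((m:ℕ):ℤ)-(i:ℤ) = (m:ℤ)+1-((i:ℤ)+1) := fun i => by push_cast; ring
  have h1 : Jop (G sh s' t' (n+1) (m+1))
      = ∑ i ∈ Finset.range (m+1), ((n+i).choose i : ℚ) •
          pre ((n:ℤ)+(i:ℤ)) (sh (wd s') (wd (((m:ℤ)+1-(i:ℤ)) :: t')))
        + ∑ i ∈ Finset.range (n+1), ((m+i).choose i : ℚ) •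
          pre ((m:ℤ)+(i:ℤ)) (sh (wd (((n:ℤ)+1-(i:ℤ)) :: s')) (wd t')) := by
    unfold G
    rw [map_add, map_sum, map_sum]
    congr 1 <;> refine Finset.sum_congr rfl fun i _ => ?_ <;>
      simp only [map_smul, Jop_pre, chsucc, e1, e2, e3, e4]
  have h2 : G sh s' t' n (m+1)
      = ∑ i ∈ Finset.range (m+1), ((n+i-1).choose i : ℚ) •
          pre ((n:ℤ)+(i:ℤ)) (sh (wd s') (wd (((m:ℤ)+1-(i:ℤ)) :: t')))
        + ∑ i ∈ Finset.range n, ((m+i).choose i : ℚ) •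
          pre ((m:ℤ)+((i:ℤ)+1)) (sh (wd (((n:ℤ)+1-((i:ℤ)+1)) :: s')) (wd t')) := by
    unfold G
    congr 1 <;> refine Finset.sum_congr rfl fun i _ => ?_ <;>
      simp only [chsucc, e2, e5, e6]
  have h3 : G sh s' t' (n+1) m
      = ∑ i ∈ Finset.range m, ((n+i).choose i : ℚ) •
          pre ((n:ℤ)+((i:ℤ)+1)) (sh (wd s') (wd (((m:ℤ)+1-((i:ℤ)+1)) :: t')))
        + ∑ i ∈ Finset.range (n+1), ((m+i-1).choose i : ℚ) •
          pre ((m:ℤ)+(i:ℤ)) (sh (wd (((n:ℤ)+1-(i:ℤ)) :: s')) (wd t')) := by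
    unfold G
    congr 1 <;> refine Finset.sum_congr rfl fun i _ => ?_ <;>
      simp only [chsucc, e7, e8, e4]
  rw [h1, h2, h3,
    pascal_sum n m (fun i => pre ((n:ℤ)+(i:ℤ)) (sh (wd s') (wd (((m:ℤ)+1-(i:ℤ)) :: t')))),
    pascal_sum m n (fun i => pre ((m:ℤ)+(i:ℤ)) (sh (wd (((n:ℤ)+1-(i:ℤ)) :: s')) (wd t')))]
  push_cast
  abel


lemma G_apply_nil (sh : W →ₗ[ℚ] W →ₗ[ℚ] W) (s' t' : List ℤ) (a b : ℕ) :
    (G sh s' t' a b) [] = 0 := by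
  unfold G
  rw [Finsupp.add_apply, Finset.sum_apply', Finset.sum_apply']
  simp [Finsupp.smul_apply, pre_apply_nil]

lemma euler_key (sh : W →ₗ[ℚ] W →ₗ[ℚ] W) (hsh : IsExtShuffle sh) (s' t' : List ℤ) :
    ∀ N a b : ℕ, a + b = N → 1 ≤ a + b →
      sh (wd ((a : ℤ) :: s')) (wd ((b : ℤ) :: t')) = G sh s' t' a b := by
  intro N
  induction N with
  | zero => intro a b h h1; omega
  | succ N ih =>
    intro a b hab _
    match a, b with
    | 0, b =>
      have hb : 1 ≤ b := by omega
      have : ((0:ℕ) : ℤ) = (0 : ℤ) := by norm_num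
      rw [this, G_zero_left sh s' t' b hb, ← pre_wd 0 s', sh_pre_zero_left sh hsh]
    | a+1, 0 =>
      have : ((0:ℕ) : ℤ) = (0 : ℤ) := by norm_num
      rw [this, G_zero_right sh s' t' (a+1) (by omega), ← pre_wd 0 t',
        sh_pre_zero_right sh hsh ((a+1 : ℕ) : ℤ) s' (by positivity)]
    | a+1, b+1 =>
      have ih1 : sh (wd ((a : ℤ) :: s')) (wd (((b+1 : ℕ) : ℤ) :: t')) = G sh s' t' a (b+1) :=
        ih a (b+1) (by omega) (by omega)
      have ih2 : sh (wd (((a+1 : ℕ) : ℤ) :: s')) (wd ((b : ℤ) :: t')) = G sh s' t' (a+1) b :=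
        ih (a+1) b (by omega) (by omega)
      set X := sh (wd (((a+1 : ℕ) : ℤ) :: s')) (wd (((b+1 : ℕ) : ℤ) :: t'))
        - G sh s' t' (a+1) (b+1) with hX
      have hJX : Jop X = 0 := by
        rw [hX, map_sub, hsh.leibniz, Jop_wd, Jop_wd, Jop_G,
          show ((a+1 : ℕ) : ℤ) - 1 = (a : ℤ) from by push_cast; ring,
          show ((b+1 : ℕ) : ℤ) - 1 = (b : ℤ) from by push_cast; ring,
          ih1, ih2]
        abel
      have h0X : X [] = 0 := by
        rw [hX, Finsupp.sub_apply, G_apply_nil,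
          hsh.graded _ _ [] (by simp), sub_zero]
      have h := Jop_inj h0X hJX
      rw [hX] at h
      exact sub_eq_zero.mp h

/-- The generalized Euler decomposition formula for the extended
shuffle product. -/
theorem generalized_euler_decomposition
    (sh : W →ₗ[ℚ] W →ₗ[ℚ] W) (hsh : IsExtShuffle sh)
    (s₁ t₁ : ℕ) (hs : 1 ≤ s₁) (ht : 1 ≤ t₁) (s' t' : List ℤ) :
    sh (wd ((s₁ : ℤ) :: s')) (wd ((t₁ : ℤ) :: t'))
      = ∑ i ∈ Finset.range t₁, ((s₁ - 1 + i).choose i : ℚ) •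
          pre ((s₁ : ℤ) + i) (sh (wd s') (wd (((t₁ : ℤ) - i) :: t')))
      + ∑ i ∈ Finset.range s₁, ((t₁ - 1 + i).choose i : ℚ) •
          pre ((t₁ : ℤ) + i) (sh (wd (((s₁ : ℤ) - i) :: s')) (wd t')) := by
  rw [euler_key sh hsh s' t' (s₁ + t₁) s₁ t₁ rfl (by omega)]
  unfold G
  congr 1 <;> refine Finset.sum_congr rfl fun i _ => ?_
  · rw [show s₁ + i - 1 = s₁ - 1 + i from by omega]
  · rw [show t₁ + i - 1 = t₁ - 1 + i from by omega]

end
end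

section
/- On the Q-vector space H_{≥1} spanned by 1 and symbols [s_1,...,s_k] with s_i ≥ 1, define linear operators δ_i (i ≥ 1) by δ_i(1) = 0, δ_i([s_1,...,s_k]) = Σ_{j=1}^i s_j [s_1,...,s_j+1,...,s_k] if i ≤ k, and 0 if i > k; and define J_{≥1}(1)=0, J_{≥1}([s_1, s]) = [s_1−1, s] if s_1 > 1, = 0 if s_1 = 1. Then for every basis element [s_1,...,s_k] with 1 ≤ i ≤ k, the commutator satisfies (J_{≥1}δ_i − δ_i J_{≥1})([s_1,...,s_k]) = [s_1,...,s_k]. -/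
open Finsupp TensorProduct

noncomputable section

lemma J1_wd (a : ℤ) (s : List ℤ) :
    J1 (wd (a :: s)) = if a = 1 then 0 else wd ((a - 1) :: s) := by
  simp only [J1, wd, Finsupp.lsum_single]
  split
  · simp
  · simp [Finsupp.lsingle_apply]

lemma del_wd (i : ℕ) (l : List ℤ) (h : i ≤ l.length) :
    del i (wd l) = ∑ j ∈ Finset.range i,
      ((l.getD j 0 : ℤ) : ℚ) • wd (l.set j (l.getD j 0 + 1)) := by
  simp only [del, wd, Finsupp.lsum_single, if_pos h]
  simp [Finsupp.lsingle_apply]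

/-- The commutator identity `(J_{≥1} δ_i - δ_i J_{≥1})([s₁,…,s_k]) = [s₁,…,s_k]`
for `1 ≤ i ≤ k` on basis words with entries `≥ 1`. -/
theorem J1_del_commutator
    (l : List ℤ) (hl : Pos l) (i : ℕ) (hi1 : 1 ≤ i) (hik : i ≤ l.length) :
    J1 (del i (wd l)) - del i (J1 (wd l)) = wd l := by
  cases l with
  | nil => simp at hik; omega
  | cons a s =>
    obtain ⟨n, rfl⟩ : ∃ n, i = n + 1 := ⟨i - 1, by omega⟩
    have hs : n ≤ s.length := by simpa using hik
    have ha : 1 ≤ a := hl a (by simp)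
    rw [del_wd _ _ hik, J1_wd, Finset.sum_range_succ']
    simp only [List.getD_cons_succ, List.getD_cons_zero, List.set_cons_succ,
      List.set_cons_zero]
    rw [map_add, map_sum]
    simp only [map_smul, J1_wd]
    by_cases h1 : a = 1
    · subst h1
      norm_num
    · rw [if_neg h1, if_neg (by omega : ¬ a + 1 = 1)]
      rw [del_wd _ _ (by simpa using hik), Finset.sum_range_succ']
      simp only [List.getD_cons_succ, List.getD_cons_zero, List.set_cons_succ,
        List.set_cons_zero, if_neg h1]
      have : a - 1 + 1 = a := by ring
      rw [this]
      have key : (((a - 1 : ℤ)) : ℚ) • wd (a :: s)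
          = ((a : ℤ) : ℚ) • wd (a :: s) - wd (a :: s) := by
        push_cast
        rw [sub_smul, one_smul]
      rw [key, show a + 1 - 1 = a from by ring]
      abel

end
end

section
/- Let H_{≤0} be the Q-span of 1 and symbols [s_1,...,s_n] with all s_i ≤ 0, with grading G_0 = {1} and G_k = {[s_1,...,s_n] : n − (s_1+...+s_n) = k} for k ≥ 1. Then H_{≤0} is closed under the extended shuffle product ⧢, the product is graded (Q G_k ⧢ Q G_ℓ ⊆ Q G_{k+ℓ}), and the operator J_{≤0} ([s_1,s] ↦ [s_1−1,s], 1 ↦ 0) is a derivation of degree 1 with respect to this grading (mapping Q G_k to Q G_{k+1}). -/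
open Finsupp TensorProduct

noncomputable section

def Sset (c : ℤ) : Set (List ℤ) := {l | NP l ∧ l.sum = c}

lemma Jop_wd_nil : Jop (wd []) = 0 := by
  simp [Jop, wd, Finsupp.lsum_single]

lemma Jop_wd_cons (a : ℤ) (r : List ℤ) : Jop (wd (a :: r)) = wd ((a - 1) :: r) := by
  simp [Jop, wd, Finsupp.lsum_single]

lemma map_supp (A : W →ₗ[ℚ] W) {S T : Set (List ℤ)}
    (h : ∀ l ∈ S, A (wd l) ∈ Finsupp.supported ℚ ℚ T)
    {x : W} (hx : x ∈ Finsupp.supported ℚ ℚ S) :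
    A x ∈ Finsupp.supported ℚ ℚ T := by
  rw [Finsupp.supported_eq_span_single] at hx
  induction hx using Submodule.span_induction with
  | mem y hy =>
    obtain ⟨l, hl, rfl⟩ := hy
    exact h l hl
  | zero => simp
  | add y z _ _ hy hz => rw [map_add]; exact Submodule.add_mem _ hy hz
  | smul a y _ hy => rw [map_smul]; exact Submodule.smul_mem _ _ hy

lemma wd_mem {c : ℤ} {l : List ℤ} (h1 : NP l) (h2 : l.sum = c) :
    wd l ∈ Finsupp.supported ℚ ℚ (Sset c) :=
  Finsupp.single_mem_supported ℚ 1 ⟨h1, h2⟩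

lemma Jop_supp {c : ℤ} {x : W} (hx : x ∈ Finsupp.supported ℚ ℚ (Sset c)) :
    Jop x ∈ Finsupp.supported ℚ ℚ (Sset (c - 1)) := by
  refine map_supp Jop (fun l hl => ?_) hx
  obtain ⟨hNP, hsum⟩ := hl
  match l with
  | [] => rw [Jop_wd_nil]; simp
  | a :: r =>
    rw [Jop_wd_cons]
    refine wd_mem (fun b hb => ?_) ?_
    · rcases List.mem_cons.1 hb with rfl | hb
      · have := hNP a List.mem_cons_self; omega
      · exact hNP b (List.mem_cons_of_mem _ hb)
    · simp only [List.sum_cons] at hsum ⊢; omega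

lemma main_lemma (sh : W →ₗ[ℚ] W →ₗ[ℚ] W) (hsh : IsExtShuffle sh) :
    ∀ n : ℕ, ∀ s t : List ℤ, NP s → NP t → s.length + t.length ≤ n →
      sh (wd s) (wd t) ∈ Finsupp.supported ℚ ℚ (Sset (s.sum + t.sum)) := by
  intro n
  induction n with
  | zero =>
    intro s t hs ht hlen
    match s, t with
    | [], [] => rw [hsh.one_mul]; exact wd_mem (fun a ha => by simp at ha) (by simp)
    | [], _ :: _ => simp at hlen
    | _ :: _, _ => simp at hlen
  | succ n ih =>
    intro s t hs ht hlen
    match s with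
    | [] =>
      rw [hsh.one_mul]
      exact wd_mem ht (by simp)
    | u :: s' =>
      have hu : u ≤ 0 := hs u List.mem_cons_self
      have hs' : NP s' := fun a ha => hs a (List.mem_cons_of_mem _ ha)
      have hlen' : s'.length + t.length ≤ n := by
        simp only [List.length_cons] at hlen; omega
      have key : ∀ k : ℕ, ∀ u : ℤ, u ≤ 0 → (-u).toNat ≤ k → ∀ t : List ℤ, NP t →
          s'.length + t.length ≤ n →
          sh (wd (u :: s')) (wd t) ∈ Finsupp.supported ℚ ℚ (Sset (u + s'.sum + t.sum)) := by
        intro k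
        induction k with
        | zero =>
          intro u hu hk t ht hlt
          have hu0 : u = 0 := by omega
          subst hu0
          rw [← hsh.zero_mul_word s', hsh.assoc]
          refine map_supp _ (fun l hl => ?_) (ih s' t hs' ht hlt)
          rw [hsh.zero_mul_word]
          refine wd_mem (fun b hb => ?_) ?_
          · rcases List.mem_cons.1 hb with rfl | hb
            · omega
            · exact hl.1 b hb
          · simp only [List.sum_cons, hl.2]; ring
        | succ k ihk =>
          intro u hu hk t ht hlt
          by_cases hcase : (-u).toNat ≤ k
          · exact ihk u hu hcase t ht hlt
          · have hu1 : u + 1 ≤ 0 := by omega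
            have hk' : (-(u + 1)).toNat ≤ k := by omega
            have hJ : wd (u :: s') = Jop (wd ((u + 1) :: s')) := by
              rw [Jop_wd_cons]; ring_nf
            have hle : sh (wd (u :: s')) (wd t)
                = Jop (sh (wd ((u + 1) :: s')) (wd t)) - sh (wd ((u + 1) :: s')) (Jop (wd t)) := by
              rw [hsh.leibniz (wd ((u + 1) :: s')) (wd t), ← hJ]; abel
            rw [hle]
            refine Submodule.sub_mem _ ?_ ?_
            · have h1 := Jop_supp (ihk (u + 1) hu1 hk' t ht hlt)
              have : u + 1 + s'.sum + t.sum - 1 = u + s'.sum + t.sum := by ring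
              rwa [this] at h1
            · match t with
              | [] => rw [Jop_wd_nil]; simp
              | v :: t' =>
                have hv : v ≤ 0 := ht v List.mem_cons_self
                have ht' : NP ((v - 1) :: t') := by
                  intro b hb
                  rcases List.mem_cons.1 hb with rfl | hb
                  · omega
                  · exact ht b (List.mem_cons_of_mem _ hb)
                rw [Jop_wd_cons]
                have h2 := ihk (u + 1) hu1 hk' ((v - 1) :: t') ht'
                  hlt
                have : u + 1 + s'.sum + ((v - 1) :: t').sum
                    = u + s'.sum + (v :: t').sum := by
                  simp only [List.sum_cons]; ring
                rwa [this] at h2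
      have h := key (-u).toNat u hu le_rfl t ht hlen'
      have : u + s'.sum + t.sum = (u :: s').sum + t.sum := by simp
      rwa [this] at h

/-- `H_{≤0}` is closed under the extended shuffle product, the product is
graded with respect to the grading `G_k` (degree `gdeg l = n - (s₁+⋯+s_n)`), and `J_{≤0}` is a
derivation of degree `1` with respect to this grading. -/
theorem Hle0_graded_subalgebra
    (sh : W →ₗ[ℚ] W →ₗ[ℚ] W) (hsh : IsExtShuffle sh) :
    -- closure and gradedness of the product
    (∀ s t : List ℤ, NP s → NP t →
      ∀ l ∈ (sh (wd s) (wd t)).support, NP l ∧ gdeg l = gdeg s + gdeg t)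
    -- `J_{≤0}` is a derivation (restriction of the Leibniz rule)
    ∧ (∀ x y : W, Jop (sh x y) = sh (Jop x) y + sh x (Jop y))
    -- `J_{≤0}` has degree `1`: it maps `G_k` into `G_{k+1}`
    ∧ (∀ l : List ℤ, NP l → ∀ m ∈ (Jop (wd l)).support, NP m ∧ gdeg m = gdeg l + 1) := by
  refine ⟨?_, hsh.leibniz, ?_⟩
  · intro s t hs ht l hl
    have hmem := main_lemma sh hsh (s.length + t.length) s t hs ht le_rfl
    rw [Finsupp.mem_supported] at hmem
    have hS : l ∈ Sset (s.sum + t.sum) := hmem hl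
    have hlen : l.length = s.length + t.length := by
      by_contra hne
      exact (Finsupp.mem_support_iff.1 hl) (hsh.graded s t l hne)
    refine ⟨hS.1, ?_⟩
    have hsum := hS.2
    simp only [gdeg, hlen, hsum]
    push_cast
    ring
  · intro l hl m hm
    match l with
    | [] => rw [Jop_wd_nil] at hm; simp at hm
    | a :: r =>
      rw [Jop_wd_cons] at hm
      have : m = (a - 1) :: r := by
        have := Finsupp.support_single_subset hm
        simpa using this
      subst this
      constructor
      · intro b hb
        rcases List.mem_cons.1 hb with rfl | hb
        · have := hl a List.mem_cons_self; omega
        · exact hl b (List.mem_cons_of_mem _ hb)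
      · simp only [gdeg, List.length_cons, List.sum_cons]
        push_cast
        ring

end
end
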